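/- arXiv:1912.04263 — 2 statements merged into one kernel-verified Lean document; each statement's English description precedes it below -/
import Mathlib

section
/- If there exists ȳ ∈ ℝ^m such that Aᵀȳ = 0 and lᵀ(ȳ)₋ + uᵀ(ȳ)₊ < 0, then the set {x ∈ ℝ^n : l ≤ Ax ≤ u} is empty, i.e., the QP with constraints l ≤ Ax ≤ u is primal infeasible. -/
open Matrix

/-- Farkas-type certificate of primal infeasibility: if `Aᵀ ȳ = 0` and
`lᵀ ȳ₋ + uᵀ ȳ₊ < 0`, then there is no `x` with `l ≤ A x ≤ u`. -/
theorem primal_infeasibility_certificate (m n : ℕ)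
    (A : Matrix (Fin m) (Fin n) ℝ) (l u : Fin m → ℝ) (hlu : ∀ i, l i ≤ u i)
    (ybar : Fin m → ℝ)
    (h1 : Aᵀ.mulVec ybar = 0)
    (h2 : l ⬝ᵥ (fun i => min (ybar i) 0) + u ⬝ᵥ (fun i => max (ybar i) 0) < 0) :
    ¬ ∃ x : Fin n → ℝ, ∀ i, l i ≤ A.mulVec x i ∧ A.mulVec x i ≤ u i := by
  rintro ⟨x, hx⟩
  have hzero : ybar ⬝ᵥ A.mulVec x = 0 := by
    rw [dotProduct_mulVec, ← Matrix.mulVec_transpose, h1]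
    simp
  have hle : ybar ⬝ᵥ A.mulVec x ≤
      l ⬝ᵥ (fun i => min (ybar i) 0) + u ⬝ᵥ (fun i => max (ybar i) 0) := by
    rw [dotProduct, dotProduct, dotProduct, ← Finset.sum_add_distrib]
    apply Finset.sum_le_sum
    intro i _
    rcases le_or_gt 0 (ybar i) with h | h
    · have : min (ybar i) 0 = 0 := min_eq_right h
      rw [this, max_eq_left h]
      have := mul_le_mul_of_nonneg_left (hx i).2 h
      linarith
    · have : max (ybar i) 0 = 0 := max_eq_right h.le
      rw [this, min_eq_left h.le]
      have := mul_le_mul_of_nonpos_left (hx i).1 h.le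
      linarith
  linarith
end

section
/- Let K ∈ ℝ^{n×n} be symmetric positive definite, b ∈ ℝ^n, and let p⁰, …, p^{n−1} be a K-conjugate set of nonzero vectors. Starting from any x⁰ and iterating x^{k+1} = x^k + α^k p^k with α^k = −((Kx^k − b)ᵀp^k)/((p^k)ᵀKp^k), the iterate x^n satisfies Kx^n = b. -/
/-!
Let `r = K x - b` be the residual. Moving along `d` changes `r ⬝ᵥ q` by a multiple of
`q ⬝ᵥ K d`, so a step along `p k` leaves `r ⬝ᵥ p j` unchanged for `j ≠ k`, while the exact line
search makes `r ⬝ᵥ p k` vanish. Hence after `n` steps the residual is orthogonal to every `p j`.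
Nonzero `K`-conjugate vectors are linearly independent when `K` is positive definite, so the
`n` directions span `ℝⁿ` and the final residual is zero.
-/

open Matrix

section ConjugateDirections

variable {𝕜 ι κ : Type*} [Field 𝕜] [Fintype ι]

theorem linearIndependent_of_conjugate [DecidableEq ι] (K : Matrix ι ι 𝕜) (p : κ → ι → 𝕜)
    (hd : ∀ i, p i ⬝ᵥ K *ᵥ p i ≠ 0) (hconj : ∀ i j, i ≠ j → p i ⬝ᵥ K *ᵥ p j = 0) :
    LinearIndependent 𝕜 p :=
  LinearMap.linearIndependent_of_isOrthoᵢ (B := toBilin' K)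
    (fun i j hij => by simpa [toBilin'_apply'] using hconj i j hij)
    (fun i => by simpa [toBilin'_apply'] using hd i)

theorem eq_zero_of_forall_dotProduct_eq_zero {p : κ → ι → 𝕜}
    (hp : Submodule.span 𝕜 (Set.range p) = ⊤) {r : ι → 𝕜} (h : ∀ j, r ⬝ᵥ p j = 0) : r = 0 := by
  have hr : dotProductBilin 𝕜 𝕜 r = 0 := LinearMap.ext_on_range hp (by simpa using h)
  exact dotProduct_eq_zero_iff.mp fun w => by simpa using LinearMap.congr_fun hr w

theorem residual_add_smul_dotProduct (K : Matrix ι ι 𝕜) (b x d q : ι → 𝕜) (α : 𝕜) :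
    (K *ᵥ (x + α • d) - b) ⬝ᵥ q = (K *ᵥ x - b) ⬝ᵥ q + α * (q ⬝ᵥ K *ᵥ d) := by
  rw [mulVec_add, mulVec_smul, add_sub_right_comm, add_dotProduct, smul_dotProduct,
    smul_eq_mul, dotProduct_comm (K *ᵥ d)]

theorem residual_dotProduct_conjugateDirections_eq_zero {m : ℕ} (K : Matrix ι ι 𝕜)
    (b : ι → 𝕜) (p : Fin m → ι → 𝕜) (hd : ∀ i, p i ⬝ᵥ K *ᵥ p i ≠ 0)
    (hconj : ∀ i j, i ≠ j → p i ⬝ᵥ K *ᵥ p j = 0) (x : ℕ → ι → 𝕜)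
    (hiter : ∀ k : Fin m,
      x (k + 1) = x k + (-((K *ᵥ x k - b) ⬝ᵥ p k) / (p k ⬝ᵥ K *ᵥ p k)) • p k)
    (j : Fin m) : (K *ᵥ x m - b) ⬝ᵥ p j = 0 := by
  suffices h : ∀ i ≤ m, ∀ j : Fin m, (j : ℕ) < i → (K *ᵥ x i - b) ⬝ᵥ p j = 0 from
    h m le_rfl j j.2
  intro i
  induction i with
  | zero => intro _ j hj; omega
  | succ i ih =>
    intro hi j hj
    let k : Fin m := ⟨i, hi⟩
    change (K *ᵥ x (k + 1) - b) ⬝ᵥ p j = 0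
    rw [hiter k, residual_add_smul_dotProduct]
    rcases Nat.lt_succ_iff_lt_or_eq.mp hj with hji | hji
    · have hjk : j ≠ k := Fin.ne_of_val_ne hji.ne
      rw [ih (Nat.le_of_succ_le hi) j hji, hconj j k hjk, mul_zero, add_zero]
    · rw [show j = k from Fin.ext hji, div_mul_cancel₀ _ (hd k), add_neg_cancel]

end ConjugateDirections

/-- Finite termination of the conjugate directions method: after `n` exact line
minimizations along `K`-conjugate directions, the iterate solves `K x = b`. -/
theorem conjugate_directions_finite_termination (n : ℕ)
    (K : Matrix (Fin n) (Fin n) ℝ) (hK : K.PosDef) (b : Fin n → ℝ)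
    (p : Fin n → Fin n → ℝ)
    (hnz : ∀ i, p i ≠ 0)
    (hconj : ∀ i j, i ≠ j → p i ⬝ᵥ K.mulVec (p j) = 0)
    (x : ℕ → Fin n → ℝ)
    (hiter : ∀ k : Fin n,
      x (k + 1) = x k +
        (-((K.mulVec (x k) - b) ⬝ᵥ p k) / (p k ⬝ᵥ K.mulVec (p k))) • p k) :
    K.mulVec (x n) = b := by
  have hd : ∀ i, p i ⬝ᵥ K *ᵥ p i ≠ 0 := fun i => by
    simpa using (hK.dotProduct_mulVec_pos (hnz i)).ne'
  have hspan : Submodule.span ℝ (Set.range p) = ⊤ :=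
    (linearIndependent_of_conjugate K p hd hconj).span_eq_top_of_card_eq_finrank' (by simp)
  exact sub_eq_zero.mp <| eq_zero_of_forall_dotProduct_eq_zero hspan
    (residual_dotProduct_conjugateDirections_eq_zero K b p hd hconj x hiter)
end
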